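/- Let Π = (δ, Σ, 𝒞) be an LCL problem for δ-regular rooted trees and let Σ̃ ⊆ Σ. Then for every label σ ∈ trim(Σ̃) there exists a node configuration (σ : a_1 a_2 ⋯ a_δ) ∈ 𝒞 such that a_j ∈ trim(Σ̃) for all 1 ≤ j ≤ δ. -/

import Mathlib

/-- `rOk 𝒞 S i σ`: there is a correct labeling of the complete rooted tree `T_i`
whose root has label `σ` and all of whose labels lie in `S` (every node with
children must use a node configuration from `𝒞`). -/
def rOk {L : Type} (C : Set (L × Multiset L)) (S : Set L) : ℕ → L → Prop
  | 0, σ => σ ∈ S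
  | i + 1, σ => σ ∈ S ∧ ∃ m : Multiset L, (σ, m) ∈ C ∧ ∀ a ∈ m, rOk C S i a

/-- `trim(Σ̃)` for rooted trees: labels `σ ∈ S` such that for every `i ≥ 1` there is
a correct labeling of `T_i` with root label `σ` and all labels in `S`. -/
def trimR {L : Type} (C : Set (L × Multiset L)) (S : Set L) : Set L :=
  {σ | σ ∈ S ∧ ∀ i : ℕ, 1 ≤ i → rOk C S i σ}

/-!
A label of `trim(Σ̃)` has, for each depth `i`, a configuration whose children all root
correct trees of depth `i`. Only the set of child labels matters, and there are finitely
many such sets, so one of them serves infinitely many depths. Since deep trees can be cut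
down to shallower ones, its labels root correct trees of every depth, i.e. lie in `trim(Σ̃)`.
-/

open Filter

section

variable {L : Type} {C : Set (L × Multiset L)} {S : Set L}

lemma rOk_of_rOk_succ : ∀ (i : ℕ) (σ : L), rOk C S (i + 1) σ → rOk C S i σ
  | 0, _, h => h.1
  | i + 1, _, ⟨hσ, m, hm, hchildren⟩ =>
    ⟨hσ, m, hm, fun a ha => rOk_of_rOk_succ i a (hchildren a ha)⟩

lemma rOk_antitone (σ : L) : Antitone fun i => rOk C S i σ :=
  antitone_nat_of_succ_le fun i => rOk_of_rOk_succ i σ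

lemma rOk_of_frequently {σ : L} (h : ∃ᶠ i in atTop, rOk C S i σ) (i : ℕ) : rOk C S i σ :=
  let ⟨_, hij, hj⟩ := frequently_atTop.1 h i
  rOk_antitone σ hij hj

lemma mem_trimR_iff {σ : L} : σ ∈ trimR C S ↔ ∀ i, rOk C S i σ := by
  refine ⟨fun ⟨hσ, h⟩ i => ?_, fun h => ⟨h 0, fun i _ => h i⟩⟩
  rcases i with _ | i
  exacts [hσ, h _ i.succ_pos]

end

theorem stmt8_general {L : Type} [Fintype L]
    (C : Set (L × Multiset L))
    (St : Set L) :
    ∀ σ ∈ trimR C St, ∃ m : Multiset L, (σ, m) ∈ C ∧ ∀ a ∈ m, a ∈ trimR C St := by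
  intro σ hσ
  have hsupport : ∀ i, ∃ T : Set L,
      (∃ m, (σ, m) ∈ C ∧ ∀ a ∈ m, a ∈ T) ∧ ∀ a ∈ T, rOk C St i a := fun i =>
    let ⟨_, m, hm, hchildren⟩ := mem_trimR_iff.1 hσ (i + 1)
    ⟨{a | a ∈ m}, ⟨m, hm, fun _ => id⟩, hchildren⟩
  obtain ⟨T, hT⟩ := frequently_exists.1 (Frequently.of_forall (f := atTop) hsupport)
  obtain ⟨-, ⟨m, hm, hmT⟩, -⟩ := hT.exists
  exact ⟨m, hm, fun a ha => mem_trimR_iff.2 <|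
    rOk_of_frequently <| hT.mono fun _ hi => hi.2 a (hmT a ha)⟩

/-- Property of trimming, rooted trees. -/
theorem stmt8 {L : Type} [Fintype L] [DecidableEq L]
    (δ : ℕ) (hδ : 1 ≤ δ) (C : Set (L × Multiset L))
    (hC : ∀ c ∈ C, Multiset.card c.2 = δ)
    (St : Set L) :
    ∀ σ ∈ trimR C St, ∃ m : Multiset L, (σ, m) ∈ C ∧ ∀ a ∈ m, a ∈ trimR C St :=
  stmt8_general C St
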